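/- Let (ℙ^x)_{x∈E} be a family of Borel probability measures on Ω such that for every x ∈ E the pushforward of ℙ^x under evaluation at time 0 is the Dirac measure δ_x, and let 0 < c ≤ 1. If m is a lower semi-continuous 1-bounded pseudometric on E such that G_c(m)(x,y) = m(x,y) for all x, y ∈ E (m is a fixpoint of G_c), then also F_c(m)(x,y) = m(x,y) for all x, y ∈ E (m is a fixpoint of F_c). -/

import Mathlib

open MeasureTheory Topology Filter BoundedContinuousFunction NNReal

noncomputable section

/-- A 1-bounded pseudometric on a type `X`. -/
structure IsPseudometric {X : Type*} (m : X → X → ℝ) : Prop where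
  nonneg : ∀ x y, 0 ≤ m x y
  le_one : ∀ x y, m x y ≤ 1
  refl : ∀ x, m x x = 0
  symm : ∀ x y, m x y = m y x
  triangle : ∀ x y z, m x z ≤ m x y + m y z

/-- `γ` is a coupling of `P` and `Q`. -/
def IsCoupling {X Y : Type*} [MeasurableSpace X] [MeasurableSpace Y]
    (γ : Measure (X × Y)) (P : Measure X) (Q : Measure Y) : Prop :=
  IsProbabilityMeasure γ ∧ γ.map Prod.fst = P ∧ γ.map Prod.snd = Q

/-- The optimal transport cost `W(c)(P,Q) = inf_{γ ∈ Γ(P,Q)} ∫ c dγ`. -/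
def Wc {X : Type*} [MeasurableSpace X] (c : X → X → ℝ) (P Q : Measure X) : ℝ :=
  sInf {r : ℝ | ∃ γ : Measure (X × X), IsCoupling γ P Q ∧ r = ∫ z, c z.1 z.2 ∂γ}

/-- The space of (bounded) continuous trajectories `[0,∞) → E`, with the uniform metric. -/
abbrev Traj (E : Type*) [PseudoMetricSpace E] := BoundedContinuousFunction ℝ≥0 E

instance {E : Type*} [PseudoMetricSpace E] : MeasurableSpace (Traj E) := borel _
instance {E : Type*} [PseudoMetricSpace E] : BorelSpace (Traj E) := ⟨rfl⟩

/-- The discounted uniform pseudometric `U_c(m)(ω,ω') = sup_{t ≥ 0} c^t · m(ω(t), ω'(t))`. -/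
def Udisc {E : Type*} [PseudoMetricSpace E] (c : ℝ) (m : E → E → ℝ)
    (ω ω' : Traj E) : ℝ :=
  ⨆ t : ℝ≥0, c ^ (t : ℝ) * m (ω t) (ω' t)

/-- `P_t(x)`: the pushforward of `ℙ^x` under evaluation at time `t`. -/
def kernelAt {E : Type*} [PseudoMetricSpace E] [MeasurableSpace E]
    (ℙ : E → Measure (Traj E)) (t : ℝ≥0) (x : E) : Measure E :=
  (ℙ x).map fun ω => ω t

/-- The functional `F_c(m)(x,y) = sup_{t ≥ 0} c^t W(m)(P_t(x), P_t(y))`. -/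
def Ffun {E : Type*} [PseudoMetricSpace E] [MeasurableSpace E]
    (ℙ : E → Measure (Traj E)) (c : ℝ) (m : E → E → ℝ) (x y : E) : ℝ :=
  ⨆ t : ℝ≥0, c ^ (t : ℝ) * Wc m (kernelAt ℙ t x) (kernelAt ℙ t y)

/-- The functional `G_c(m)(x,y) = W(U_c(m))(ℙ^x, ℙ^y)`. -/
def Gfun {E : Type*} [PseudoMetricSpace E] [MeasurableSpace E]
    (ℙ : E → Measure (Traj E)) (c : ℝ) (m : E → E → ℝ) (x y : E) : ℝ :=
  Wc (Udisc c m) (ℙ x) (ℙ y)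

/-- The family `x ↦ ℙ^x` is weakly continuous: if `xₙ → x` then
`∫ F dℙ^{xₙ} → ∫ F dℙ^x` for every bounded continuous `F`. -/
def WeaklyContinuousFamily {A B : Type*} [TopologicalSpace A] [TopologicalSpace B]
    [MeasurableSpace B] (ℙ : A → Measure B) : Prop :=
  ∀ (F : B →ᵇ ℝ) (x : A) (u : ℕ → A), Tendsto u atTop (nhds x) →
    Tendsto (fun n => ∫ ω, F ω ∂(ℙ (u n))) atTop (nhds (∫ ω, F ω ∂(ℙ x)))


section Helpers

variable {E : Type*} [MetricSpace E] [PolishSpace E] [MeasurableSpace E] [BorelSpace E]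
variable {c : ℝ} {m : E → E → ℝ}

private lemma rpow_le_one' (hc0 : 0 < c) (hc1 : c ≤ 1) (t : ℝ≥0) : c ^ (t : ℝ) ≤ 1 :=
  Real.rpow_le_one hc0.le hc1 t.coe_nonneg

private lemma term_nonneg (hc0 : 0 < c) (hpm : IsPseudometric m) (ω ω' : Traj E) (t : ℝ≥0) :
    0 ≤ c ^ (t : ℝ) * m (ω t) (ω' t) :=
  mul_nonneg (Real.rpow_nonneg hc0.le _) (hpm.nonneg _ _)

private lemma term_le_one (hc0 : 0 < c) (hc1 : c ≤ 1) (hpm : IsPseudometric m)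
    (ω ω' : Traj E) (t : ℝ≥0) : c ^ (t : ℝ) * m (ω t) (ω' t) ≤ 1 := by
  have h1 := rpow_le_one' hc0 hc1 t
  have h2 := hpm.nonneg (ω t) (ω' t)
  have h3 := hpm.le_one (ω t) (ω' t)
  have h4 : (0:ℝ) ≤ c ^ (t : ℝ) := Real.rpow_nonneg hc0.le _
  nlinarith

private lemma term_bdd (hc0 : 0 < c) (hc1 : c ≤ 1) (hpm : IsPseudometric m)
    (ω ω' : Traj E) :
    BddAbove (Set.range fun t : ℝ≥0 => c ^ (t : ℝ) * m (ω t) (ω' t)) :=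
  ⟨1, by rintro r ⟨t, rfl⟩; exact term_le_one hc0 hc1 hpm ω ω' t⟩

private lemma le_udisc (hc0 : 0 < c) (hc1 : c ≤ 1) (hpm : IsPseudometric m)
    (ω ω' : Traj E) (t : ℝ≥0) :
    c ^ (t : ℝ) * m (ω t) (ω' t) ≤ Udisc c m ω ω' :=
  le_ciSup (term_bdd hc0 hc1 hpm ω ω') t

private lemma udisc_le_one (hc0 : 0 < c) (hc1 : c ≤ 1) (hpm : IsPseudometric m)
    (ω ω' : Traj E) : Udisc c m ω ω' ≤ 1 :=
  ciSup_le fun t => term_le_one hc0 hc1 hpm ω ω' t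

private lemma udisc_nonneg (hc0 : 0 < c) (hc1 : c ≤ 1) (hpm : IsPseudometric m)
    (ω ω' : Traj E) : 0 ≤ Udisc c m ω ω' :=
  le_trans (term_nonneg hc0 hpm ω ω' 0) (le_udisc hc0 hc1 hpm ω ω' 0)

private lemma udisc_eq_rat_iSup (hc0 : 0 < c) (hc1 : c ≤ 1) (hpm : IsPseudometric m)
    (hlsc : LowerSemicontinuous fun p : E × E => m p.1 p.2) (ω ω' : Traj E) :
    Udisc c m ω ω' = ⨆ q : ℚ, c ^ ((Real.toNNReal (q : ℝ) : ℝ≥0) : ℝ) *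
      m (ω (Real.toNNReal (q : ℝ))) (ω' (Real.toNNReal (q : ℝ))) := by
  have hbQ : BddAbove (Set.range fun q : ℚ => c ^ ((Real.toNNReal (q : ℝ) : ℝ≥0) : ℝ) *
      m (ω (Real.toNNReal (q : ℝ))) (ω' (Real.toNNReal (q : ℝ)))) :=
    ⟨1, by rintro r ⟨q, rfl⟩; exact term_le_one hc0 hc1 hpm ω ω' _⟩
  have hS0 : (0:ℝ) ≤ ⨆ q : ℚ, c ^ ((Real.toNNReal (q : ℝ) : ℝ≥0) : ℝ) *
      m (ω (Real.toNNReal (q : ℝ))) (ω' (Real.toNNReal (q : ℝ))) :=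
    le_trans (term_nonneg hc0 hpm ω ω' _) (le_ciSup hbQ (0:ℚ))
  apply le_antisymm
  · refine ciSup_le fun t => ?_
    refine le_of_forall_pos_le_add fun ε hε => ?_
    have hct : 0 < c ^ (t : ℝ) := Real.rpow_pos_of_pos hc0 _
    rcases eq_or_lt_of_le (hpm.nonneg (ω t) (ω' t)) with h0 | hpos
    · rw [← h0, mul_zero]; linarith
    · set δ : ℝ := min (ε/2) (m (ω t) (ω' t)) with hδdef
      set δ' : ℝ := min (ε/2) (c ^ (t : ℝ)) with hδ'def
      have hδpos : 0 < δ := lt_min (by linarith) hpos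
      have hδ'pos : 0 < δ' := lt_min (by linarith) hct
      have hδle : δ ≤ m (ω t) (ω' t) := min_le_right _ _
      have hδ'le : δ' ≤ c ^ (t : ℝ) := min_le_right _ _
      have hE1 : ∀ᶠ p in nhds ((ω t, ω' t) : E × E), m (ω t) (ω' t) - δ < m p.1 p.2 :=
        hlsc (ω t, ω' t) (m (ω t) (ω' t) - δ) (by dsimp only; linarith)
      have hcontpair : Continuous fun s : ℝ≥0 => ((ω s, ω' s) : E × E) :=
        ω.continuous.prodMk ω'.continuous
      have hE1' : ∀ᶠ s in nhds t, m (ω t) (ω' t) - δ < m (ω s) (ω' s) :=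
        (hcontpair.tendsto t).eventually hE1
      have hccont : Continuous fun s : ℝ≥0 => c ^ (s : ℝ) := by
        have heq : (fun s : ℝ≥0 => c ^ (s : ℝ)) = fun s : ℝ≥0 => Real.exp (Real.log c * s) :=
          funext fun s => Real.rpow_def_of_pos hc0 _
        rw [heq]
        exact Real.continuous_exp.comp (continuous_const.mul NNReal.continuous_coe)
      have hE2 : ∀ᶠ s : ℝ≥0 in nhds t, c ^ (t : ℝ) - δ' < c ^ (s : ℝ) :=
        (hccont.tendsto t).eventually (eventually_gt_nhds (by linarith))
      obtain ⟨η, hηpos, hη⟩ := Metric.eventually_nhds_iff.1 (hE1'.and hE2)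
      obtain ⟨q, hq1, hq2⟩ := exists_rat_btwn (lt_add_of_pos_right (t : ℝ) hηpos)
      have hq0 : (0:ℝ) ≤ (q : ℝ) := le_trans t.coe_nonneg hq1.le
      have hsq : ((Real.toNNReal (q : ℝ) : ℝ≥0) : ℝ) = (q : ℝ) := Real.coe_toNNReal _ hq0
      have hdist : dist (Real.toNNReal (q : ℝ)) t < η := by
        rw [NNReal.dist_eq, hsq, abs_of_pos (by linarith)]
        linarith
      obtain ⟨h1, h2⟩ := hη hdist
      have key : (c ^ (t : ℝ) - δ') * (m (ω t) (ω' t) - δ) ≤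
          c ^ ((Real.toNNReal (q : ℝ) : ℝ≥0) : ℝ) *
            m (ω (Real.toNNReal (q : ℝ))) (ω' (Real.toNNReal (q : ℝ))) :=
        mul_le_mul h2.le h1.le (by linarith) (Real.rpow_nonneg hc0.le _)
      have hqS := le_ciSup hbQ q
      have hmt1 : m (ω t) (ω' t) ≤ 1 := hpm.le_one _ _
      have hct1 : c ^ (t : ℝ) ≤ 1 := rpow_le_one' hc0 hc1 t
      have hδε : δ ≤ ε/2 := min_le_left _ _
      have hδ'ε : δ' ≤ ε/2 := min_le_left _ _
      nlinarith [hpm.nonneg (ω t) (ω' t)]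
  · exact ciSup_le fun q => le_udisc hc0 hc1 hpm ω ω' (Real.toNNReal (q : ℝ))

private lemma eval_measurable (t : ℝ≥0) : Measurable fun ω : Traj E => ω t :=
  (continuous_eval_const t).measurable

private lemma pair_eval_measurable (t : ℝ≥0) :
    Measurable fun p : Traj E × Traj E => ((p.1 t, p.2 t) : E × E) :=
  ((eval_measurable t).comp measurable_fst).prodMk ((eval_measurable t).comp measurable_snd)

private lemma udisc_measurable (hc0 : 0 < c) (hc1 : c ≤ 1) (hpm : IsPseudometric m)
    (hlsc : LowerSemicontinuous fun p : E × E => m p.1 p.2) :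
    Measurable fun p : Traj E × Traj E => Udisc c m p.1 p.2 := by
  have hmE : Measurable fun p : E × E => m p.1 p.2 := hlsc.measurable
  have hrw : (fun p : Traj E × Traj E => Udisc c m p.1 p.2)
      = fun p : Traj E × Traj E => ⨆ q : ℚ, c ^ ((Real.toNNReal (q : ℝ) : ℝ≥0) : ℝ) *
        m (p.1 (Real.toNNReal (q : ℝ))) (p.2 (Real.toNNReal (q : ℝ))) :=
    funext fun p => udisc_eq_rat_iSup hc0 hc1 hpm hlsc p.1 p.2
  rw [hrw]
  exact Measurable.iSup fun q =>
    measurable_const.mul (hmE.comp (pair_eval_measurable (Real.toNNReal (q : ℝ))))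

private lemma integrable_of_bdd {X : Type*} [MeasurableSpace X] {γ : Measure X}
    [IsProbabilityMeasure γ] {f : X → ℝ} (hmeas : Measurable f)
    (h0 : ∀ z, 0 ≤ f z) (h1 : ∀ z, f z ≤ 1) : Integrable f γ := by
  refine (integrable_const (1:ℝ)).mono' hmeas.aestronglyMeasurable ?_
  exact Filter.Eventually.of_forall fun z => by
    rw [Real.norm_eq_abs, abs_of_nonneg (h0 z)]; exact h1 z

private lemma Wc_le_integral {X : Type*} [MeasurableSpace X] {f : X → X → ℝ}
    (hf : ∀ a b, 0 ≤ f a b) {P Q : Measure X} {γ : Measure (X × X)}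
    (hγ : IsCoupling γ P Q) : Wc f P Q ≤ ∫ z, f z.1 z.2 ∂γ :=
  csInf_le ⟨0, by rintro r ⟨γ', _, rfl⟩; exact integral_nonneg fun z => hf _ _⟩ ⟨γ, hγ, rfl⟩

private lemma Wc_dirac (hpm : IsPseudometric m) (x y : E) :
    Wc m (Measure.dirac x) (Measure.dirac y) = m x y := by
  have hset : {r : ℝ | ∃ γ : Measure (E × E),
      IsCoupling γ (Measure.dirac x) (Measure.dirac y) ∧ r = ∫ z, m z.1 z.2 ∂γ}
      = {m x y} := by
    apply Set.eq_singleton_iff_unique_mem.mpr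
    constructor
    · refine ⟨Measure.dirac ((x, y) : E × E), ⟨inferInstance, ?_, ?_⟩, ?_⟩
      · exact Measure.map_dirac' measurable_fst ((x, y) : E × E)
      · exact Measure.map_dirac' measurable_snd ((x, y) : E × E)
      · exact (integral_dirac (fun z : E × E => m z.1 z.2) ((x, y) : E × E)).symm
    · rintro r ⟨γ, ⟨hγp, hγ1, hγ2⟩, rfl⟩
      haveI := hγp
      have hx : γ (Prod.fst ⁻¹' ({x}ᶜ : Set E)) = 0 := by
        rw [← Measure.map_apply measurable_fst (measurableSet_singleton x).compl, hγ1]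
        simp
      have hy : γ (Prod.snd ⁻¹' ({y}ᶜ : Set E)) = 0 := by
        rw [← Measure.map_apply measurable_snd (measurableSet_singleton y).compl, hγ2]
        simp
      have hnull : γ ({((x, y) : E × E)}ᶜ) = 0 := by
        refine measure_mono_null ?_ (measure_union_null hx hy)
        intro p hp
        rw [Set.mem_union]
        by_contra hcon
        push_neg at hcon
        obtain ⟨h1', h2'⟩ := hcon
        simp only [Set.mem_preimage, Set.mem_compl_iff, Set.mem_singleton_iff, not_not]
          at h1' h2'
        exact hp (by simp [Set.mem_singleton_iff, Prod.ext_iff, h1', h2'])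
      have hae : ∀ᵐ p ∂γ, m p.1 p.2 = m x y := by
        have hae' : ∀ᵐ p ∂γ, p = ((x, y) : E × E) := by
          rw [Filter.eventually_iff, mem_ae_iff]
          convert hnull using 2
          rfl
        filter_upwards [hae'] with p hp
        rw [hp]
      rw [integral_congr_ae hae, integral_const]
      simp
  rw [Wc, hset, csInf_singleton]

end Helpers

theorem fixpoint_Gfun_implies_fixpoint_Ffun
    {E : Type*} [MetricSpace E] [PolishSpace E] [MeasurableSpace E] [BorelSpace E]
    (hΔ : ∀ x y : E, dist x y ≤ 1)
    (ℙ : E → Measure (Traj E)) (hprob : ∀ x, IsProbabilityMeasure (ℙ x))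
    (hdirac : ∀ x : E, (ℙ x).map (fun ω => ω 0) = Measure.dirac x)
    (c : ℝ) (hc0 : 0 < c) (hc1 : c ≤ 1)
    (m : E → E → ℝ) (hpm : IsPseudometric m)
    (hlsc : LowerSemicontinuous fun p : E × E => m p.1 p.2)
    (hfix : ∀ x y, Gfun ℙ c m x y = m x y) :
    ∀ x y, Ffun ℙ c m x y = m x y := by
  intro x y
  haveI := hprob x; haveI := hprob y
  have hmE : Measurable fun p : E × E => m p.1 p.2 := hlsc.measurable
  have key : ∀ t : ℝ≥0, c ^ (t : ℝ) * Wc m (kernelAt ℙ t x) (kernelAt ℙ t y) ≤ m x y := by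
    intro t
    rw [← hfix x y]
    have hpair : Measurable fun p : Traj E × Traj E => ((p.1 t, p.2 t) : E × E) :=
      pair_eval_measurable t
    refine le_csInf ⟨_, ⟨(ℙ x).prod (ℙ y), ⟨inferInstance, ?_, ?_⟩, rfl⟩⟩ ?_
    · simp
    · simp
    · rintro r ⟨γ, ⟨hγp, hγ1, hγ2⟩, rfl⟩
      haveI := hγp
      have hcoup : IsCoupling (γ.map fun p : Traj E × Traj E => (p.1 t, p.2 t))
          (kernelAt ℙ t x) (kernelAt ℙ t y) := by
        refine ⟨Measure.isProbabilityMeasure_map hpair.aemeasurable, ?_, ?_⟩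
        · rw [Measure.map_map measurable_fst hpair]
          have h : (Prod.fst ∘ fun p : Traj E × Traj E => ((p.1 t, p.2 t) : E × E))
              = (fun ω : Traj E => ω t) ∘ Prod.fst := rfl
          rw [h, ← Measure.map_map (eval_measurable t) measurable_fst, hγ1]
          rfl
        · rw [Measure.map_map measurable_snd hpair]
          have h : (Prod.snd ∘ fun p : Traj E × Traj E => ((p.1 t, p.2 t) : E × E))
              = (fun ω : Traj E => ω t) ∘ Prod.snd := rfl
          rw [h, ← Measure.map_map (eval_measurable t) measurable_snd, hγ2]
          rfl
      have step1 : Wc m (kernelAt ℙ t x) (kernelAt ℙ t y)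
          ≤ ∫ z, m z.1 z.2 ∂(γ.map fun p : Traj E × Traj E => (p.1 t, p.2 t)) :=
        Wc_le_integral hpm.nonneg hcoup
      have step3 : ∫ z, c ^ (t : ℝ) * m z.1 z.2
            ∂(γ.map fun p : Traj E × Traj E => (p.1 t, p.2 t))
          = ∫ p, c ^ (t : ℝ) * m (p.1 t) (p.2 t) ∂γ :=
        integral_map hpair.aemeasurable (measurable_const.mul hmE).aestronglyMeasurable
      have step4 : ∫ p, c ^ (t : ℝ) * m (p.1 t) (p.2 t) ∂γ
          ≤ ∫ p, Udisc c m p.1 p.2 ∂γ := by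
        refine integral_mono ?_ ?_ ?_
        · exact integrable_of_bdd (measurable_const.mul (hmE.comp hpair))
            (fun p => term_nonneg hc0 hpm _ _ t) (fun p => term_le_one hc0 hc1 hpm _ _ t)
        · exact integrable_of_bdd (udisc_measurable hc0 hc1 hpm hlsc)
            (fun p => udisc_nonneg hc0 hc1 hpm _ _) (fun p => udisc_le_one hc0 hc1 hpm _ _)
        · exact fun p => le_udisc hc0 hc1 hpm p.1 p.2 t
      calc c ^ (t : ℝ) * Wc m (kernelAt ℙ t x) (kernelAt ℙ t y)
          ≤ c ^ (t : ℝ) * ∫ z, m z.1 z.2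
              ∂(γ.map fun p : Traj E × Traj E => (p.1 t, p.2 t)) :=
            mul_le_mul_of_nonneg_left step1 (Real.rpow_nonneg hc0.le _)
        _ = ∫ z, c ^ (t : ℝ) * m z.1 z.2
              ∂(γ.map fun p : Traj E × Traj E => (p.1 t, p.2 t)) :=
            (integral_const_mul _ _).symm
        _ = ∫ p, c ^ (t : ℝ) * m (p.1 t) (p.2 t) ∂γ := step3
        _ ≤ ∫ p, Udisc c m p.1 p.2 ∂γ := step4
  have hbdd : BddAbove (Set.range fun t : ℝ≥0 =>
      c ^ (t : ℝ) * Wc m (kernelAt ℙ t x) (kernelAt ℙ t y)) :=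
    ⟨m x y, by rintro r ⟨t, rfl⟩; exact key t⟩
  have hzero : c ^ ((0 : ℝ≥0) : ℝ) * Wc m (kernelAt ℙ 0 x) (kernelAt ℙ 0 y) = m x y := by
    rw [show kernelAt ℙ 0 x = Measure.dirac x from hdirac x,
        show kernelAt ℙ 0 y = Measure.dirac y from hdirac y,
        Wc_dirac hpm, NNReal.coe_zero, Real.rpow_zero, one_mul]
  apply le_antisymm
  · exact ciSup_le key
  · exact hzero ▸ le_ciSup hbdd (0 : ℝ≥0)
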